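/- Let M and N be additive commutative groups and let F : M → N be a function which is even (F(-x) = F(x) for all x ∈ M) and satisfies the cube relation. Then for any r ≥ 1, any x₁, …, x_r ∈ M and any integers n₁, …, n_r, one has the polarization identity 2 • F(∑_{i=1}^r nᵢ • xᵢ) = ∑_{i=1}^r ∑_{j=1}^r (nᵢ nⱼ) • (F(xᵢ + xⱼ) − F(xᵢ) − F(xⱼ)). -/

import Mathlib

/-!
The cube relation says exactly that the polar form `polar F x y = F (x + y) - F x - F y` is
additive in `x`; being symmetric, it is biadditive, so for `y = ∑ i, nᵢ • xᵢ` the value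
`polar F y y` expands as `∑ i, ∑ j, (nᵢ nⱼ) • polar F xᵢ xⱼ`. Evenness turns the cube relation
at `(y, y, -y)` into `F (2 • y) = 4 • F y`, that is `polar F y y = 2 • F y`.
-/

open Finset QuadraticMap

theorem AddMonoidHom.map_sum_zsmul_sum_zsmul {ι κ M N P : Type*} [AddCommGroup M]
    [AddCommGroup N] [AddCommGroup P] (B : M →+ N →+ P) (s : Finset ι) (t : Finset κ)
    (m : ι → ℤ) (x : ι → M) (n : κ → ℤ) (y : κ → N) :
    B (∑ i ∈ s, m i • x i) (∑ j ∈ t, n j • y j) =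
      ∑ i ∈ s, ∑ j ∈ t, (m i * n j) • B (x i) (y j) := by
  simp only [map_sum, map_zsmul, AddMonoidHom.finsetSum_apply, AddMonoidHom.coe_smul,
    Pi.smul_apply, smul_sum, mul_smul]
  rw [sum_comm]
  simp only [smul_comm (n _) (m _)]

section CubeRelation

variable {M N : Type*} [AddCommGroup M] [AddCommGroup N]

def SatisfiesCubeRelation (F : M → N) : Prop :=
  ∀ x y z : M, F (x + y + z) + F x + F y + F z = F (x + y) + F (y + z) + F (x + z)

variable {F : M → N}

theorem SatisfiesCubeRelation.map_zero (hF : SatisfiesCubeRelation F) : F 0 = 0 := by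
  simpa using hF 0 0 0

theorem SatisfiesCubeRelation.polar_add_left (hF : SatisfiesCubeRelation F) (x x' y : M) :
    polar F (x + x') y = polar F x y + polar F x' y :=
  polar_add_left_iff.mpr <| by rw [← add_assoc, ← add_assoc, hF, add_comm y x]

def SatisfiesCubeRelation.polarAddMonoidHom (hF : SatisfiesCubeRelation F) : M →+ M →+ N :=
  AddMonoidHom.mk'
    (fun x => AddMonoidHom.mk' (polar F x) fun y y' => by
      simp only [polar_comm F x, hF.polar_add_left])
    fun x x' => AddMonoidHom.ext (hF.polar_add_left x x')

theorem SatisfiesCubeRelation.polar_self (hF : SatisfiesCubeRelation F)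
    (heven : ∀ x : M, F (-x) = F x) (x : M) : polar F x x = (2 : ℤ) • F x := by
  have h := hF x x (-x)
  simp only [add_neg_cancel_right, add_neg_cancel, heven, hF.map_zero, add_zero] at h
  rw [polar, ← h, two_zsmul]
  abel

end CubeRelation

theorem cube_relation_polarization_identity_general
    {M N : Type*} [AddCommGroup M] [AddCommGroup N] (F : M → N)
    (heven : ∀ x : M, F (-x) = F x)
    (hcube : ∀ x y z : M,
      F (x + y + z) + F x + F y + F z = F (x + y) + F (y + z) + F (x + z))
    (r : ℕ) (x : Fin r → M) (n : Fin r → ℤ) :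
    (2 : ℤ) • F (∑ i, n i • x i) =
      ∑ i, ∑ j, (n i * n j) • (F (x i + x j) - F (x i) - F (x j)) := by
  have hF : SatisfiesCubeRelation F := hcube
  rw [← hF.polar_self heven]
  exact hF.polarAddMonoidHom.map_sum_zsmul_sum_zsmul _ _ n x n x

/-- Polarization identity: if `F : M → N` between additive commutative groups is even
and satisfies the cube relation, then for any `r ≥ 1`, `x₁, …, x_r ∈ M` and integers
`n₁, …, n_r`,
`2 • F (∑ i, nᵢ • xᵢ) = ∑ i, ∑ j, (nᵢ nⱼ) • (F (xᵢ + xⱼ) − F xᵢ − F xⱼ)`. -/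
theorem cube_relation_polarization_identity
    {M N : Type*} [AddCommGroup M] [AddCommGroup N] (F : M → N)
    (heven : ∀ x : M, F (-x) = F x)
    (hcube : ∀ x y z : M,
      F (x + y + z) + F x + F y + F z = F (x + y) + F (y + z) + F (x + z))
    (r : ℕ) (hr : 1 ≤ r) (x : Fin r → M) (n : Fin r → ℤ) :
    (2 : ℤ) • F (∑ i, n i • x i) =
      ∑ i, ∑ j, (n i * n j) • (F (x i + x j) - F (x i) - F (x j)) :=
  cube_relation_polarization_identity_general F heven hcube r x n
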